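/- For all real parameters μ, ν, γ with 0 < μ ≤ 1, γ > 0, ν ≥ μγ, and every complex number z, the derivative of the three-parameter Mittag-Leffler function satisfies (d/dz) E_{μ,ν}^γ(z) = γ · E_{μ,ν+μ}^{γ+1}(z). -/

import Mathlib

/-- The three-parameter Mittag-Leffler (Prabhakar) function
`E_{μ,ν}^γ(z) = ∑_{m=0}^∞ ((γ)_m / (m! Γ(μ m + ν))) z^m`,
where `(γ)_m = Γ(γ+m)/Γ(γ)`. -/
noncomputable def prabhakar (μ ν γ : ℝ) (z : ℂ) : ℂ :=
  ∑' m : ℕ,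
    (((Real.Gamma (γ + m) / Real.Gamma γ) / (m.factorial * Real.Gamma (μ * m + ν)) : ℝ) : ℂ)
      * z ^ m

/-!
The series can be differentiated termwise once it is known to be entire, and the differentiated
coefficients are `(n + 1) c_{n+1} = γ c'_n`, where `c'` are the coefficients of `E_{μ,ν+μ}^{γ+1}`
(from `Γ(γ + n + 1) = (γ + n) Γ(γ + n)` and `Γ(γ + 1) = γ Γ(γ)`). The series is entire by the ratio
test: `c_{n+1} / c_n = (γ + n) / (n + 1) · Γ(μ n + ν) / Γ(μ n + ν + μ)`, and log-convexity of `Γ`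
gives `Γ(x) / Γ(x + μ) ≤ (x - 1) ^ (-μ) → 0`.
-/

open Filter Topology FormalMultilinearSeries Real
open scoped NNReal Nat

namespace Real

theorem rpow_mul_Gamma_le_Gamma_add {x μ : ℝ} (hx : 1 < x) (hμ : 0 < μ) :
    (x - 1) ^ μ * Gamma x ≤ Gamma (x + μ) := by
  have hx0 : 0 < x - 1 := by linarith
  have hΓx : 0 < Gamma x := Gamma_pos_of_pos (by linarith)
  -- log Γ is convex and its slope over `[x - 1, x]` is `log (x - 1)`
  have hslope := convexOn_log_Gamma.slope_mono_adjacent (Set.mem_Ioi.2 hx0)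
    (Set.mem_Ioi.2 (by linarith : 0 < x + μ)) (by linarith : x - 1 < x) (by linarith : x < x + μ)
  have hrec : Gamma x = (x - 1) * Gamma (x - 1) := by
    simpa using Gamma_add_one hx0.ne'
  have hlog : log (Gamma x) - log (Gamma (x - 1)) = log (x - 1) := by
    rw [hrec, log_mul hx0.ne' (Gamma_pos_of_pos hx0).ne']; ring
  simp only [Function.comp_apply, hlog, sub_sub_cancel, div_one, add_sub_cancel_left,
    le_div_iff₀ hμ] at hslope
  rw [← log_le_log_iff (by positivity) (Gamma_pos_of_pos (by linarith)),
    log_mul (by positivity) hΓx.ne', log_rpow hx0]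
  linarith

theorem tendsto_Gamma_div_Gamma_add_atTop {μ : ℝ} (hμ : 0 < μ) :
    Tendsto (fun x => Gamma x / Gamma (x + μ)) atTop (𝓝 0) := by
  have hbound : Tendsto (fun x : ℝ => (x - 1) ^ (-μ)) atTop (𝓝 0) :=
    (tendsto_rpow_neg_atTop hμ).comp (tendsto_atTop_add_const_right _ (-1) tendsto_id)
  refine tendsto_of_tendsto_of_tendsto_of_le_of_le' tendsto_const_nhds hbound ?_ ?_
  · filter_upwards [eventually_gt_atTop 0] with x hx
    exact div_nonneg (Gamma_pos_of_pos hx).le (Gamma_pos_of_pos (by linarith)).le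
  · filter_upwards [eventually_gt_atTop 1] with x hx
    have hx0 : 0 < x - 1 := by linarith
    rw [div_le_iff₀ (Gamma_pos_of_pos (by linarith)), rpow_neg hx0.le, inv_mul_eq_div,
      le_div_iff₀ (by positivity)]
    exact (mul_comm _ _).trans_le (rpow_mul_Gamma_le_Gamma_add hx hμ)

end Real

theorem hasDerivAt_tsum_mul_pow {𝕜 : Type*} [RCLike 𝕜] {a b : ℕ → 𝕜}
    (hab : ∀ n : ℕ, ((n : 𝕜) + 1) * a (n + 1) = b n) (hb : (ofScalars 𝕜 b).radius = ⊤) (z : 𝕜) :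
    HasDerivAt (fun y => ∑' n, a n * y ^ n) (∑' n, b n * z ^ n) z := by
  set R : ℝ≥0 := ‖z‖₊ + 1
  have hz : z ∈ Metric.ball (0 : 𝕜) R := by simp [R]
  have hu : Summable fun n => ‖a n‖ * n * (R : ℝ) ^ (n - 1) := by
    rw [← summable_nat_add_iff 1]
    have := (ofScalars 𝕜 b).summable_norm_mul_pow (r := R) (by simp [hb])
    simp only [ofScalars_norm] at this
    refine this.congr fun n => ?_
    rw [← hab, norm_mul, Nat.add_sub_cancel]
    push_cast
    rw [show ‖(n : 𝕜) + 1‖ = n + 1 by norm_cast]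
    ring
  have hbound : ∀ n, ∀ y ∈ Metric.ball (0 : 𝕜) R,
      ‖a n * (n * y ^ (n - 1))‖ ≤ ‖a n‖ * n * (R : ℝ) ^ (n - 1) := by
    intro n y hy
    rw [norm_mul, norm_mul, norm_pow, RCLike.norm_natCast, ← mul_assoc]
    gcongr
    exact (mem_ball_zero_iff.1 hy).le
  have hsum0 : Summable fun n => a n * (0 : 𝕜) ^ n :=
    (hasSum_single 0 fun n hn => by simp [hn]).summable
  have hderiv := hasDerivAt_tsum_of_isPreconnected hu Metric.isOpen_ball
    (convex_ball (0 : 𝕜) R).isPreconnected (fun n y _ => (hasDerivAt_pow n y).const_mul (a n))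
    hbound (Metric.mem_ball_self (by positivity)) hsum0 hz
  rw [(Summable.of_norm_bounded hu fun n => hbound n z hz).tsum_eq_zero_add] at hderiv
  simpa [← hab, mul_assoc, mul_left_comm] using hderiv

noncomputable def prabhakarCoeff (μ ν γ : ℝ) (n : ℕ) : ℝ :=
  Gamma (γ + n) / Gamma γ / (n ! * Gamma (μ * n + ν))

section
variable {μ ν γ : ℝ}

theorem succ_mul_prabhakarCoeff_succ (hγ : 0 < γ) (n : ℕ) :
    ((n : ℝ) + 1) * prabhakarCoeff μ ν γ (n + 1) = γ * prabhakarCoeff μ (ν + μ) (γ + 1) n := by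
  have : Gamma γ ≠ 0 := (Gamma_pos_of_pos hγ).ne'
  simp only [prabhakarCoeff, Nat.factorial_succ]
  push_cast
  rw [Gamma_add_one hγ.ne', show γ + (n + 1) = γ + 1 + n by ring,
    show μ * (n + 1) + ν = μ * n + (ν + μ) by ring]
  field_simp

theorem tendsto_prabhakarCoeff_succ_div (hμ : 0 < μ) (hγ : 0 < γ) :
    Tendsto (fun n => prabhakarCoeff μ ν γ (n + 1) / prabhakarCoeff μ ν γ n) atTop (𝓝 0) := by
  have hlin : Tendsto (fun n : ℕ => μ * n + ν) atTop atTop :=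
    tendsto_atTop_add_const_right _ ν (tendsto_natCast_atTop_atTop.const_mul_atTop hμ)
  have hΓ := (tendsto_Gamma_div_Gamma_add_atTop hμ).comp hlin
  have hfrac : Tendsto (fun n : ℕ => (γ + 1 * n) / (1 + 1 * n)) atTop (𝓝 (1 / 1)) :=
    tendsto_add_mul_div_add_mul_atTop_nhds γ 1 1 one_ne_zero
  have hprod := hfrac.mul hΓ
  simp only [div_one, one_mul, mul_zero] at hprod
  refine hprod.congr' ?_
  filter_upwards [hlin.eventually_gt_atTop 0] with n hn
  have : 0 < Gamma (γ + n) := Gamma_pos_of_pos (by positivity)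
  have : 0 < Gamma γ := Gamma_pos_of_pos hγ
  have : 0 < Gamma (μ * n + ν) := Gamma_pos_of_pos hn
  have : 0 < Gamma (μ * n + ν + μ) := Gamma_pos_of_pos (by linarith)
  simp only [Function.comp_apply, prabhakarCoeff, Nat.factorial_succ]
  push_cast
  rw [show γ + (n + 1) = γ + n + 1 by ring, Gamma_add_one (by positivity),
    show μ * (n + 1) + ν = μ * n + ν + μ by ring]
  field_simp
  ring

theorem eventually_prabhakarCoeff_pos (hμ : 0 < μ) (hγ : 0 < γ) :
    ∀ᶠ n in atTop, 0 < prabhakarCoeff μ ν γ n := by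
  filter_upwards [(tendsto_natCast_atTop_atTop.const_mul_atTop hμ).eventually_gt_atTop (-ν)]
    with n hn
  have : 0 < Gamma (μ * n + ν) := Gamma_pos_of_pos (by linarith)
  have : 0 < Gamma (γ + n) := Gamma_pos_of_pos (by positivity)
  have : 0 < Gamma γ := Gamma_pos_of_pos hγ
  unfold prabhakarCoeff
  positivity

theorem radius_ofScalars_prabhakarCoeff (hμ : 0 < μ) (hγ : 0 < γ) :
    (ofScalars ℂ fun n => (prabhakarCoeff μ ν γ n : ℂ)).radius = ⊤ := by
  refine ofScalars_radius_eq_top_of_tendsto ℂ _ ?_ ?_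
  · filter_upwards [eventually_prabhakarCoeff_pos hμ hγ] with n hn
    exact_mod_cast hn.ne'
  · simpa [abs_div] using (tendsto_prabhakarCoeff_succ_div hμ hγ).abs

end

theorem prabhakar_hasDerivAt_general (μ ν γ : ℝ) (hμ0 : 0 < μ) (hγ : 0 < γ) (z : ℂ) :
    HasDerivAt (prabhakar μ ν γ) ((γ : ℂ) * prabhakar μ (ν + μ) (γ + 1) z) z := by
  set b : ℕ → ℂ := (γ : ℂ) • fun n => (prabhakarCoeff μ (ν + μ) (γ + 1) n : ℂ)
  have hcoeff : ∀ n : ℕ, ((n : ℂ) + 1) * prabhakarCoeff μ ν γ (n + 1) = b n := fun n => by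
    simp only [b, Pi.smul_apply, smul_eq_mul]
    exact_mod_cast succ_mul_prabhakarCoeff_succ hγ n
  have hb : (ofScalars ℂ b).radius = ⊤ := by
    rw [ofScalars_smul, radius_smul_eq _ (by exact_mod_cast hγ.ne')]
    exact radius_ofScalars_prabhakarCoeff hμ0 (by linarith)
  have hderiv := hasDerivAt_tsum_mul_pow (a := fun n => (prabhakarCoeff μ ν γ n : ℂ)) hcoeff hb z
  simp only [b, Pi.smul_apply, smul_eq_mul, mul_assoc, tsum_mul_left] at hderiv
  exact hderiv

/-- `(d/dz) E_{μ,ν}^γ(z) = γ E_{μ,ν+μ}^{γ+1}(z)`. -/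
theorem prabhakar_hasDerivAt (μ ν γ : ℝ) (hμ0 : 0 < μ) (hμ1 : μ ≤ 1) (hγ : 0 < γ)
    (hν : μ * γ ≤ ν) (z : ℂ) :
    HasDerivAt (prabhakar μ ν γ) ((γ : ℂ) * prabhakar μ (ν + μ) (γ + 1) z) z :=
  prabhakar_hasDerivAt_general μ ν γ hμ0 hγ z
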